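/- arXiv:2402.11803 — 2 statements merged into one kernel-verified Lean document; each statement's English description precedes it below -/
import Mathlib

section
/- Let $U \subseteq \mathbb{R}^{n+1}$ be open and let $u$ be a smooth function on $U$ satisfying the drift-harmonic equation $\Delta u - \tfrac{1}{2}\langle x,\nabla u\rangle = 0$ on $U$. Then at every point of $U$ one has the identity $\tfrac{1}{2}\,\mathrm{div}\big(e^{-|x|^2/4}\,\nabla(|\nabla u|^2)\big) = e^{-|x|^2/4}\,|D^2 u|^2 + \tfrac{1}{2}\,e^{-|x|^2/4}\,|\nabla u|^2$. -/
open MeasureTheory Metric Set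
noncomputable section

variable {n : ℕ}

abbrev E (n : ℕ) : Type := EuclideanSpace ℝ (Fin (n + 1))

/-- The Gaussian weight `e^{-|x|^2/4}`. -/
def gw {n : ℕ} (x : E n) : ℝ := Real.exp (-‖x‖ ^ 2 / 4)

/-- The Euclidean divergence of a vector field on `ℝ^{n+1}`. -/
def divg {n : ℕ} (X : E n → E n) (x : E n) : ℝ :=
  ∑ i : Fin (n + 1),
    (inner ℝ (fderiv ℝ X x (EuclideanSpace.single i (1 : ℝ))) (EuclideanSpace.single i (1 : ℝ)) : ℝ)

/-- The tangential divergence (relative to the unit normal `ν`) of a vector field. -/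
def tangDiv {n : ℕ} (ν X : E n → E n) (x : E n) : ℝ :=
  divg X x - (inner ℝ (fderiv ℝ X x (ν x)) (ν x) : ℝ)

/-- Mean curvature: the trace of the tangential differential of `ν`. -/
def meanCurv {n : ℕ} (ν : E n → E n) (x : E n) : ℝ := tangDiv ν ν x

/-- The tangential part of the position vector. -/
def xtan {n : ℕ} (ν : E n → E n) (x : E n) : E n := x - (inner ℝ x (ν x) : ℝ) • ν x

/-- The tangential gradient of an ambient function. -/
def tangGrad {n : ℕ} (ν : E n → E n) (u : E n → ℝ) (x : E n) : E n :=
  gradient u x - (inner ℝ (gradient u x) (ν x) : ℝ) • ν x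

/-- Laplace–Beltrami operator applied to the restriction of an ambient function. -/
def lapM {n : ℕ} (ν : E n → E n) (u : E n → ℝ) (x : E n) : ℝ :=
  tangDiv ν (tangGrad ν u) x

/-- `M` is a smooth properly embedded hypersurface of `ℝ^{n+1}`, with a (smoothly
extended) global unit normal vector field `ν`. -/
structure IsHypersurface {n : ℕ} (M : Set (E n)) (ν : E n → E n) : Prop where
  closed : IsClosed M
  nu_smooth : ContDiff ℝ (⊤ : ℕ∞) ν
  nu_unit : ∀ x ∈ M, ‖ν x‖ = 1
  localLevel : ∀ p ∈ M, ∃ r > (0 : ℝ), ∃ F : E n → ℝ, ContDiff ℝ (⊤ : ℕ∞) F ∧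
    (∀ x ∈ ball p r, (x ∈ M ↔ F x = 0)) ∧
    (∀ x ∈ ball p r ∩ M, gradient F x ≠ 0 ∧ gradient F x = ‖gradient F x‖ • ν x)

/-- The shrinker equation `H = ⟨x, ν⟩ / 2`. -/
def ShrinkerEqn {n : ℕ} (M : Set (E n)) (ν : E n → E n) : Prop :=
  ∀ x ∈ M, meanCurv ν x = (inner ℝ x (ν x) : ℝ) / 2

/-- `f ∈ H^1_loc(M)` with tangential weak gradient `G`. -/
def IsTangWeakGradOn {n : ℕ} (M : Set (E n)) (ν : E n → E n)
    (f : E n → ℝ) (G : E n → E n) : Prop :=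
  (∀ x ∈ M, (inner ℝ (G x) (ν x) : ℝ) = 0) ∧
  (∀ K : Set (E n), IsCompact K →
    IntegrableOn (fun x => f x ^ 2 + ‖G x‖ ^ 2) (M ∩ K) μH[(n : ℝ)]) ∧
  (∀ X : E n → E n, ContDiff ℝ (⊤ : ℕ∞) X → HasCompactSupport X →
    ∫ x in M, (f x * tangDiv ν X x + (inner ℝ (G x) (X x) : ℝ)
      - f x * meanCurv ν x * (inner ℝ (X x) (ν x) : ℝ)) ∂μH[(n : ℝ)] = 0)

/-- `w ∈ H^1_loc(ℝ^{n+1})` with weak gradient `W`. -/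
def IsWeakGrad {n : ℕ} (w : E n → ℝ) (W : E n → E n) : Prop :=
  (∀ K : Set (E n), IsCompact K →
    IntegrableOn (fun x => w x ^ 2 + ‖W x‖ ^ 2) K volume) ∧
  (∀ X : E n → E n, ContDiff ℝ (⊤ : ℕ∞) X → HasCompactSupport X →
    ∫ x, (w x * divg X x + (inner ℝ (W x) (X x) : ℝ)) = 0)

/-- The class `𝓔`: `w ∈ H^1_loc(ℝ^{n+1})` with finite Gaussian `H^1` norm. -/
def MemE {n : ℕ} (w : E n → ℝ) (W : E n → E n) : Prop :=
  IsWeakGrad w W ∧ Integrable (fun x => gw x * (w x ^ 2 + ‖W x‖ ^ 2)) volume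

/-- The class `𝓗`: `f ∈ H^1_loc(M)` with finite Gaussian `H^1` norm on `M`. -/
def MemH {n : ℕ} (M : Set (E n)) (ν : E n → E n) (f : E n → ℝ) (G : E n → E n) : Prop :=
  IsTangWeakGradOn M ν f G ∧
    Integrable (fun x => gw x * (f x ^ 2 + ‖G x‖ ^ 2)) (μH[(n : ℝ)].restrict M)

/-- The class `𝓗₀ ⊆ 𝓗`: unit Gaussian `L²` norm and Gaussian mean zero. -/
def MemH0 {n : ℕ} (M : Set (E n)) (ν : E n → E n) (f : E n → ℝ) (G : E n → E n) : Prop :=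
  MemH M ν f G ∧ (∫ x in M, gw x * f x ^ 2 ∂μH[(n : ℝ)]) = 1 ∧
    (∫ x in M, gw x * f x ∂μH[(n : ℝ)]) = 0

/-- The trace of `w` on `M` equals `f`. -/
def TraceEq {n : ℕ} (M : Set (E n)) (w f : E n → ℝ) : Prop :=
  ∀ᵐ x ∂(μH[(n : ℝ)].restrict M), w x = f x

/-- The functional of the variational problem. -/
def energy {n : ℕ} (α : ℝ) (M : Set (E n)) (G W : E n → E n) : ℝ :=
  (∫ x in M, gw x * ‖G x‖ ^ 2 ∂μH[(n : ℝ)]) + α * ∫ x, gw x * ‖W x‖ ^ 2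

/-- The set of values of the functional over admissible pairs. -/
def energies {n : ℕ} (α : ℝ) (M : Set (E n)) (ν : E n → E n) : Set ℝ :=
  {e | ∃ f G w W, MemH0 M ν f G ∧ MemE w W ∧ TraceEq M w f ∧ energy α M G W = e}


open Topology Filter

section Aux13
variable {n : ℕ}

lemma aux_inner_single (y : E n) (i : Fin (n+1)) :
    (inner ℝ y (EuclideanSpace.single i (1:ℝ)) : ℝ) = y i := by
  rw [EuclideanSpace.inner_single_right]; simp

lemma aux_grad_inner (f : E n → ℝ) (z v : E n) :
    (inner ℝ (gradient f z) v : ℝ) = fderiv ℝ f z v := by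
  simp [gradient, InnerProductSpace.toDual_symm_apply]

lemma aux_norm_sq (y : E n) :
    ‖y‖ ^ 2 = ∑ i, (inner ℝ y (EuclideanSpace.single i (1:ℝ)) : ℝ) ^ 2 := by
  simp_rw [aux_inner_single]
  rw [EuclideanSpace.norm_eq, Real.sq_sqrt (by positivity)]
  simp [sq_abs]

lemma aux_repr (y : E n) : ∑ i, y i • (EuclideanSpace.single i (1:ℝ)) = y := by
  have := (EuclideanSpace.basisFun (Fin (n+1)) ℝ).sum_repr y
  simpa [EuclideanSpace.basisFun_apply, EuclideanSpace.basisFun_repr] using this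

lemma aux_fderiv_eval {G₁ G₂ : Type*} [NormedAddCommGroup G₁] [NormedSpace ℝ G₁]
    [NormedAddCommGroup G₂] [NormedSpace ℝ G₂] {F : E n → G₁ →L[ℝ] G₂} {z : E n}
    (hF : DifferentiableAt ℝ F z) (b : G₁) (v : E n) :
    fderiv ℝ (fun y => F y b) z v = fderiv ℝ F z v b := by
  have h := ((ContinuousLinearMap.apply ℝ G₂ b).hasFDerivAt.comp z hF.hasFDerivAt).fderiv
  have h2 : (fun y => F y b) = (ContinuousLinearMap.apply ℝ G₂ b) ∘ F := rfl
  rw [h2, h]; rfl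

lemma aux_eval_diff {G₁ G₂ : Type*} [NormedAddCommGroup G₁] [NormedSpace ℝ G₁]
    [NormedAddCommGroup G₂] [NormedSpace ℝ G₂] {F : E n → G₁ →L[ℝ] G₂} {z : E n}
    (hF : DifferentiableAt ℝ F z) (b : G₁) :
    DifferentiableAt ℝ (fun y => F y b) z :=
  ((ContinuousLinearMap.apply ℝ G₂ b).differentiableAt).comp z hF

lemma aux_eval2_diff {G₂ : Type*} [NormedAddCommGroup G₂] [NormedSpace ℝ G₂]
    {F : E n → E n →L[ℝ] E n →L[ℝ] G₂} {z : E n}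
    (hF : DifferentiableAt ℝ F z) (b c : E n) :
    DifferentiableAt ℝ (fun y => F y b c) z :=
  aux_eval_diff (aux_eval_diff hF b) c

lemma aux_d3 {F : E n → (E n →L[ℝ] (E n →L[ℝ] ℝ))} {z : E n}
    (hF : DifferentiableAt ℝ F z) (a b v : E n) :
    fderiv ℝ (fun y => F y a b) z v = fderiv ℝ F z v a b := by
  have h1 : DifferentiableAt ℝ (fun y => F y a) z := aux_eval_diff hF a
  rw [aux_fderiv_eval h1 b v]
  congr 1
  exact aux_fderiv_eval hF a v

lemma aux_fderiv_inner_const {X : E n → E n} {z : E n}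
    (hX : DifferentiableAt ℝ X z) (w v : E n) :
    fderiv ℝ (fun y => (inner ℝ (X y) w : ℝ)) z v = (inner ℝ (fderiv ℝ X z v) w : ℝ) := by
  have h := (((innerSL ℝ).flip w).hasFDerivAt.comp z hX.hasFDerivAt).fderiv
  have h2 : (fun y => (inner ℝ (X y) w : ℝ)) = ((innerSL ℝ (E := E n)).flip w) ∘ X := rfl
  rw [h2, h]; rfl

lemma aux_gw_hasFDeriv (z : E n) :
    HasFDerivAt gw ((-(gw z) / 2) • (innerSL ℝ z)) z := by
  have h0 := ((hasStrictFDerivAt_norm_sq z).hasFDerivAt.neg).const_smul ((4:ℝ)⁻¹)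
  have heq : ((4:ℝ)⁻¹ • -fun y : E n => ‖y‖ ^ 2) = fun y : E n => -‖y‖ ^ 2 / 4 := by
    funext y; simp only [Pi.smul_apply, Pi.neg_apply, smul_eq_mul]; ring
  rw [heq] at h0
  have h3 := (Real.hasDerivAt_exp (-‖z‖ ^ 2 / 4)).comp_hasFDerivAt z h0
  have hgw : gw (n := n) = fun y => Real.exp (-‖y‖ ^ 2 / 4) := rfl
  rw [hgw]
  refine h3.congr_fderiv ?_
  ext v
  simp [Real.exp_ne_zero]
  ring

lemma aux_gw_fderiv (z v : E n) :
    fderiv ℝ gw z v = -(inner ℝ z v : ℝ) / 2 * gw z := by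
  rw [(aux_gw_hasFDeriv z).fderiv]
  simp
  ring

lemma aux_grad_diff {f : E n → ℝ} {z : E n} (hf : DifferentiableAt ℝ (fderiv ℝ f) z) :
    DifferentiableAt ℝ (gradient f) z := by
  have h2 : gradient f = fun y =>
      (InnerProductSpace.toDual ℝ (E n)).symm.toContinuousLinearEquiv (fderiv ℝ f y) := rfl
  rw [h2]
  exact ((InnerProductSpace.toDual ℝ (E n)).symm.toContinuousLinearEquiv.differentiableAt).comp z hf

lemma aux_fderiv_grad_inner {f : E n → ℝ} {z : E n}
    (hf : DifferentiableAt ℝ (fderiv ℝ f) z) (v w : E n) :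
    (inner ℝ (fderiv ℝ (gradient f) z v) w : ℝ) = fderiv ℝ (fderiv ℝ f) z v w := by
  rw [← aux_fderiv_inner_const (aux_grad_diff hf) w v]
  have h2 : (fun y => (inner ℝ (gradient f y) w : ℝ)) = fun y => fderiv ℝ f y w :=
    funext fun y => aux_grad_inner f y w
  rw [h2, aux_fderiv_eval hf w v]


lemma aux_algebra {m : ℕ} (gwx : ℝ) (g : Fin m → ℝ) (A T3 : Fin m → Fin m → ℝ)
    (xc D : Fin m → ℝ)
    (hA : ∀ i j, A j i = A i j)
    (hT3sum : ∀ i, ∑ j, T3 j i = (1/2 : ℝ) * (g i + D i))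
    (hD : ∀ i, D i = ∑ j, xc j * A i j) :
    ∑ j, (-(xc j)/2 * gwx * (∑ i, 2 * g i * A j i)
        + gwx * ∑ i, (2 * (A j i)^2 + 2 * g i * T3 j i))
      = 2 * (gwx * ∑ i, ∑ j, (A i j)^2) + gwx * ∑ i, (g i)^2 := by
  have hsplit : ∀ (f₁ f₂ f₃ : Fin m → ℝ),
      ∑ j, (f₁ j + f₂ j + f₃ j) = (∑ j, f₁ j) + (∑ j, f₂ j) + (∑ j, f₃ j) := by
    intro f₁ f₂ f₃
    rw [Finset.sum_add_distrib, Finset.sum_add_distrib]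
  calc ∑ j, (-(xc j)/2 * gwx * (∑ i, 2 * g i * A j i)
        + gwx * ∑ i, (2 * (A j i)^2 + 2 * g i * T3 j i))
      = ∑ j, ∑ i, (-(xc j) * gwx * g i * A i j + 2 * gwx * (A i j)^2
          + 2 * gwx * g i * T3 j i) := by
        refine Finset.sum_congr rfl fun j _ => ?_
        rw [Finset.mul_sum, Finset.mul_sum, ← Finset.sum_add_distrib]
        refine Finset.sum_congr rfl fun i _ => ?_
        rw [hA i j]
        ring
    _ = ∑ i, ∑ j, (-(xc j) * gwx * g i * A i j + 2 * gwx * (A i j)^2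
          + 2 * gwx * g i * T3 j i) := Finset.sum_comm
    _ = ∑ i, (-(gwx * g i) * (∑ j, xc j * A i j) + 2 * gwx * (∑ j, (A i j)^2)
          + 2 * gwx * g i * (∑ j, T3 j i)) := by
        refine Finset.sum_congr rfl fun i _ => ?_
        rw [hsplit]
        congr 1
        · congr 1
          · rw [Finset.mul_sum]
            exact Finset.sum_congr rfl fun j _ => by ring
          · rw [Finset.mul_sum]
        · rw [Finset.mul_sum]
    _ = ∑ i, (2 * gwx * (∑ j, (A i j)^2) + gwx * (g i)^2) := by
        refine Finset.sum_congr rfl fun i _ => ?_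
        rw [hT3sum i, ← hD i]
        ring
    _ = 2 * (gwx * ∑ i, ∑ j, (A i j)^2) + gwx * ∑ i, (g i)^2 := by
        rw [Finset.sum_add_distrib, ← Finset.mul_sum, ← Finset.mul_sum]
        ring

end Aux13

set_option maxHeartbeats 1600000 in
/-- If `u` is smooth and drift-harmonic (`Δu - ⟨x,∇u⟩/2 = 0`) on an open set `U ⊆ ℝ^{n+1}`,
then `½ div(e^{-|x|²/4} ∇(|∇u|²)) = e^{-|x|²/4} |D²u|² + ½ e^{-|x|²/4} |∇u|²` on `U`. -/
theorem stmt_13 {n : ℕ} (U : Set (E n)) (hU : IsOpen U) (u : E n → ℝ)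
    (hu : ContDiffOn ℝ (⊤ : ℕ∞) u U)
    (hdrift : ∀ x ∈ U, divg (gradient u) x - (inner ℝ x (gradient u x) : ℝ) / 2 = 0) :
    ∀ x ∈ U,
      (1 / 2 : ℝ) * divg (fun y => gw y • gradient (fun z => ‖gradient u z‖ ^ 2) y) x
        = gw x * (∑ i : Fin (n + 1),
              ‖fderiv ℝ (gradient u) x (EuclideanSpace.single i (1 : ℝ))‖ ^ 2)
          + (1 / 2 : ℝ) * (gw x * ‖gradient u x‖ ^ 2) := by
  intro x hx
  classical
  have hUx : U ∈ 𝓝 x := hU.mem_nhds hx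
  have hu_at : ∀ z ∈ U, ContDiffAt ℝ (⊤ : ℕ∞) u z := fun z hz => hu.contDiffAt (hU.mem_nhds hz)
  have hd1 : ∀ z ∈ U, ContDiffAt ℝ (⊤ : ℕ∞) (fderiv ℝ u) z := fun z hz =>
    (hu_at z hz).fderiv_right (by simp)
  have hd2 : ∀ z ∈ U, ContDiffAt ℝ (⊤ : ℕ∞) (fderiv ℝ (fderiv ℝ u)) z := fun z hz =>
    (hd1 z hz).fderiv_right (by simp)
  have hd1d : ∀ z ∈ U, DifferentiableAt ℝ (fderiv ℝ u) z := fun z hz =>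
    (hd1 z hz).differentiableAt (by simp)
  have hd2d : ∀ z ∈ U, DifferentiableAt ℝ (fderiv ℝ (fderiv ℝ u)) z := fun z hz =>
    (hd2 z hz).differentiableAt (by simp)
  have hgd : ∀ z ∈ U, ∀ i : Fin (n+1), DifferentiableAt ℝ (fun y => fderiv ℝ u y (EuclideanSpace.single i (1:ℝ))) z :=
    fun z hz i => aux_eval_diff (hd1d z hz) (EuclideanSpace.single i (1:ℝ))
  have hgc : ∀ z ∈ U, ∀ i : Fin (n+1), ContDiffAt ℝ (⊤ : ℕ∞) (fun y => fderiv ℝ u y (EuclideanSpace.single i (1:ℝ))) z :=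
    fun z hz i =>
      ((ContinuousLinearMap.apply ℝ ℝ (EuclideanSpace.single i (1:ℝ))).contDiff.contDiffAt).comp z (hd1 z hz)
  have hB : ∀ z ∈ U, ∀ a b : E n,
      fderiv ℝ (fun y => fderiv ℝ u y b) z a = fderiv ℝ (fderiv ℝ u) z a b :=
    fun z hz a b => aux_fderiv_eval (hd1d z hz) b a
  have hBsymm : ∀ z ∈ U, ∀ a b : E n, fderiv ℝ (fderiv ℝ u) z a b = fderiv ℝ (fderiv ℝ u) z b a :=
    fun z hz a b => ((hu_at z hz).isSymmSndFDerivAt (by rw [minSmoothness_of_isRCLikeNormedField]; exact WithTop.coe_le_coe.mpr le_top)) a b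
  have hT : ∀ z ∈ U, ∀ a b v : E n,
      fderiv ℝ (fun y => fderiv ℝ (fderiv ℝ u) y a b) z v = fderiv ℝ (fderiv ℝ (fderiv ℝ u)) z v a b :=
    fun z hz a b v => aux_d3 (hd2d z hz) a b v
  have hT12 : ∀ z ∈ U, ∀ a b c : E n, fderiv ℝ (fderiv ℝ (fderiv ℝ u)) z a b c = fderiv ℝ (fderiv ℝ (fderiv ℝ u)) z b a c := fun z hz a b c =>
    DFunLike.congr_fun (((hd1 z hz).isSymmSndFDerivAt (by rw [minSmoothness_of_isRCLikeNormedField]; exact WithTop.coe_le_coe.mpr le_top)) a b) c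
  have hT23 : ∀ z ∈ U, ∀ v a b : E n, fderiv ℝ (fderiv ℝ (fderiv ℝ u)) z v a b = fderiv ℝ (fderiv ℝ (fderiv ℝ u)) z v b a := by
    intro z hz v a b
    have hev : (fun y => fderiv ℝ (fderiv ℝ u) y a b) =ᶠ[𝓝 z] (fun y => fderiv ℝ (fderiv ℝ u) y b a) := by
      filter_upwards [hU.mem_nhds hz] with y hy using hBsymm y hy a b
    rw [← hT z hz a b v, ← hT z hz b a v, hev.fderiv_eq]
  -- the drift equation in coordinates
  have hdiveq : ∀ z ∈ U, divg (gradient u) z = ∑ i, fderiv ℝ (fderiv ℝ u) z (EuclideanSpace.single i (1:ℝ)) (EuclideanSpace.single i (1:ℝ)) := by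
    intro z hz
    unfold divg
    exact Finset.sum_congr rfl fun i _ => aux_fderiv_grad_inner (hd1d z hz) (EuclideanSpace.single i (1:ℝ)) (EuclideanSpace.single i (1:ℝ))
  have hdrift2 : ∀ z ∈ U,
      (∑ i, fderiv ℝ (fderiv ℝ u) z (EuclideanSpace.single i (1:ℝ)) (EuclideanSpace.single i (1:ℝ))) = (1/2 : ℝ) * fderiv ℝ u z z := by
    intro z hz
    have h := hdrift z hz
    rw [hdiveq z hz] at h
    have h2 : (inner ℝ z (gradient u z) : ℝ) = fderiv ℝ u z z := by
      rw [real_inner_comm]; exact aux_grad_inner u z z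
    rw [h2] at h
    linarith
  -- differentiating the drift equation
  have hdd : ∀ i : Fin (n+1), (∑ j, fderiv ℝ (fderiv ℝ (fderiv ℝ u)) x (EuclideanSpace.single i (1:ℝ)) (EuclideanSpace.single j (1:ℝ)) (EuclideanSpace.single j (1:ℝ)))
      = (1/2 : ℝ) * (fderiv ℝ u x (EuclideanSpace.single i (1:ℝ)) + fderiv ℝ (fderiv ℝ u) x (EuclideanSpace.single i (1:ℝ)) x) := by
    intro i
    have hev : (fun z => ∑ j, fderiv ℝ (fderiv ℝ u) z (EuclideanSpace.single j (1:ℝ)) (EuclideanSpace.single j (1:ℝ)))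
        =ᶠ[𝓝 x] (fun z => (1/2 : ℝ) * fderiv ℝ u z z) := by
      filter_upwards [hUx] with y hy using hdrift2 y hy
    have hL : fderiv ℝ (fun z => ∑ j, fderiv ℝ (fderiv ℝ u) z (EuclideanSpace.single j (1:ℝ)) (EuclideanSpace.single j (1:ℝ))) x (EuclideanSpace.single i (1:ℝ))
        = ∑ j, fderiv ℝ (fderiv ℝ (fderiv ℝ u)) x (EuclideanSpace.single i (1:ℝ)) (EuclideanSpace.single j (1:ℝ)) (EuclideanSpace.single j (1:ℝ)) := by
      rw [fderiv_fun_sum (fun j _ => aux_eval2_diff (hd2d x hx) (EuclideanSpace.single j (1:ℝ)) (EuclideanSpace.single j (1:ℝ)))]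
      rw [ContinuousLinearMap.sum_apply]
      exact Finset.sum_congr rfl fun j _ => hT x hx (EuclideanSpace.single j (1:ℝ)) (EuclideanSpace.single j (1:ℝ)) (EuclideanSpace.single i (1:ℝ))
    have happ : DifferentiableAt ℝ (fun z => fderiv ℝ u z z) x :=
      (hd1d x hx).clm_apply differentiableAt_fun_id
    have hR : fderiv ℝ (fun z => (1/2 : ℝ) * fderiv ℝ u z z) x (EuclideanSpace.single i (1:ℝ))
        = (1/2 : ℝ) * (fderiv ℝ u x (EuclideanSpace.single i (1:ℝ)) + fderiv ℝ (fderiv ℝ u) x (EuclideanSpace.single i (1:ℝ)) x) := by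
      rw [fderiv_const_mul happ]
      rw [ContinuousLinearMap.smul_apply, smul_eq_mul]
      congr 1
      rw [fderiv_clm_apply (hd1d x hx) differentiableAt_fun_id]
      simp [fderiv_id']
    rw [← hL, hev.fderiv_eq, hR]
  -- expansion of a linear functional over the basis
  have hexp : ∀ (φ : E n →L[ℝ] ℝ) (y : E n), φ y = ∑ j, y j * φ (EuclideanSpace.single j (1:ℝ)) := by
    intro φ y
    conv_lhs => rw [← aux_repr y]
    rw [map_sum]
    exact Finset.sum_congr rfl fun j _ => by rw [ContinuousLinearMap.map_smul, smul_eq_mul]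
  -- rewrite the norm-squared-gradient function
  have hw : (fun z => ‖gradient u z‖ ^ 2) = fun z => ∑ i, (fderiv ℝ u z (EuclideanSpace.single i (1:ℝ)))^2 := by
    funext z
    rw [aux_norm_sq (gradient u z)]
    exact Finset.sum_congr rfl fun i _ => by rw [aux_grad_inner]
  rw [hw]
  have hWc : ContDiffAt ℝ (⊤ : ℕ∞) (fun z => ∑ i, (fderiv ℝ u z (EuclideanSpace.single i (1:ℝ)))^2) x :=
    ContDiffAt.sum fun i _ => (hgc x hx i).pow 2
  have hWd1 : DifferentiableAt ℝ (fderiv ℝ (fun z => ∑ i, (fderiv ℝ u z (EuclideanSpace.single i (1:ℝ)))^2)) x :=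
    (hWc.fderiv_right (m := (⊤ : ℕ∞)) (by simp)).differentiableAt (by simp)
  have hgwd : DifferentiableAt ℝ gw x := (aux_gw_hasFDeriv x).differentiableAt
  have hXd : DifferentiableAt ℝ
      (fun y => gw y • gradient (fun z => ∑ i, (fderiv ℝ u z (EuclideanSpace.single i (1:ℝ)))^2) y) x :=
    hgwd.smul (aux_grad_diff hWd1)
  -- divergence as a sum of scalar derivatives
  have hdivX : divg (fun y => gw y • gradient (fun z => ∑ i, (fderiv ℝ u z (EuclideanSpace.single i (1:ℝ)))^2) y) x
      = ∑ j, fderiv ℝ (fun y => gw y * fderiv ℝ (fun z => ∑ i, (fderiv ℝ u z (EuclideanSpace.single i (1:ℝ)))^2) y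
          (EuclideanSpace.single j (1:ℝ))) x (EuclideanSpace.single j (1:ℝ)) := by
    unfold divg
    refine Finset.sum_congr rfl fun j _ => ?_
    rw [← aux_fderiv_inner_const hXd (EuclideanSpace.single j (1:ℝ)) (EuclideanSpace.single j (1:ℝ))]
    have hfun : (fun y => (inner ℝ (gw y • gradient (fun z => ∑ i, (fderiv ℝ u z (EuclideanSpace.single i (1:ℝ)))^2) y) (EuclideanSpace.single j (1:ℝ)) : ℝ))
        = fun y => gw y * fderiv ℝ (fun z => ∑ i, (fderiv ℝ u z (EuclideanSpace.single i (1:ℝ)))^2) y (EuclideanSpace.single j (1:ℝ)) := by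
      funext y
      rw [real_inner_smul_left, aux_grad_inner]
    rw [hfun]
  -- pointwise formula for the derivative of |∇u|² on U
  have hP : ∀ z ∈ U, ∀ j : Fin (n+1),
      fderiv ℝ (fun z => ∑ i, (fderiv ℝ u z (EuclideanSpace.single i (1:ℝ)))^2) z (EuclideanSpace.single j (1:ℝ))
        = ∑ i, 2 * fderiv ℝ u z (EuclideanSpace.single i (1:ℝ)) * fderiv ℝ (fderiv ℝ u) z (EuclideanSpace.single j (1:ℝ)) (EuclideanSpace.single i (1:ℝ)) := by
    intro z hz j
    rw [fderiv_fun_sum (fun i _ => (hgd z hz i).fun_pow 2)]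
    rw [ContinuousLinearMap.sum_apply]
    refine Finset.sum_congr rfl fun i _ => ?_
    have hsq : (fun y => (fderiv ℝ u y (EuclideanSpace.single i (1:ℝ)))^2)
        = fun y => (fderiv ℝ u y (EuclideanSpace.single i (1:ℝ))) * (fderiv ℝ u y (EuclideanSpace.single i (1:ℝ))) := by
      funext y; ring
    rw [hsq, fderiv_fun_mul (hgd z hz i) (hgd z hz i)]
    simp only [ContinuousLinearMap.add_apply, ContinuousLinearMap.smul_apply, smul_eq_mul]
    rw [hB z hz (EuclideanSpace.single j (1:ℝ)) (EuclideanSpace.single i (1:ℝ))]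
    ring
  have hQd : ∀ j : Fin (n+1), DifferentiableAt ℝ
      (fun y => ∑ i, 2 * fderiv ℝ u y (EuclideanSpace.single i (1:ℝ)) * fderiv ℝ (fderiv ℝ u) y (EuclideanSpace.single j (1:ℝ)) (EuclideanSpace.single i (1:ℝ))) x :=
    fun j => DifferentiableAt.fun_sum fun i _ =>
      ((hgd x hx i).const_mul 2).mul (aux_eval2_diff (hd2d x hx) (EuclideanSpace.single j (1:ℝ)) (EuclideanSpace.single i (1:ℝ)))
  -- the per-direction term of the divergence
  have hterm : ∀ j : Fin (n+1),
      fderiv ℝ (fun y => gw y * fderiv ℝ (fun z => ∑ i, (fderiv ℝ u z (EuclideanSpace.single i (1:ℝ)))^2) y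
          (EuclideanSpace.single j (1:ℝ))) x (EuclideanSpace.single j (1:ℝ))
        = -(x j)/2 * gw x * (∑ i, 2 * fderiv ℝ u x (EuclideanSpace.single i (1:ℝ)) * fderiv ℝ (fderiv ℝ u) x (EuclideanSpace.single j (1:ℝ)) (EuclideanSpace.single i (1:ℝ)))
          + gw x * ∑ i, (2 * (fderiv ℝ (fderiv ℝ u) x (EuclideanSpace.single j (1:ℝ)) (EuclideanSpace.single i (1:ℝ)))^2
              + 2 * fderiv ℝ u x (EuclideanSpace.single i (1:ℝ)) * fderiv ℝ (fderiv ℝ (fderiv ℝ u)) x (EuclideanSpace.single j (1:ℝ)) (EuclideanSpace.single j (1:ℝ)) (EuclideanSpace.single i (1:ℝ))) := by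
    intro j
    have hev : (fun y => gw y * fderiv ℝ (fun z => ∑ i, (fderiv ℝ u z (EuclideanSpace.single i (1:ℝ)))^2) y
          (EuclideanSpace.single j (1:ℝ)))
        =ᶠ[𝓝 x] (fun y => gw y * ∑ i, 2 * fderiv ℝ u y (EuclideanSpace.single i (1:ℝ)) * fderiv ℝ (fderiv ℝ u) y (EuclideanSpace.single j (1:ℝ)) (EuclideanSpace.single i (1:ℝ))) := by
      filter_upwards [hUx] with y hy
      rw [hP y hy j]
    rw [hev.fderiv_eq]
    have hQder : fderiv ℝ (fun y => ∑ i, 2 * fderiv ℝ u y (EuclideanSpace.single i (1:ℝ)) * fderiv ℝ (fderiv ℝ u) y (EuclideanSpace.single j (1:ℝ)) (EuclideanSpace.single i (1:ℝ))) x (EuclideanSpace.single j (1:ℝ))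
        = ∑ i, (2 * (fderiv ℝ (fderiv ℝ u) x (EuclideanSpace.single j (1:ℝ)) (EuclideanSpace.single i (1:ℝ)))^2
            + 2 * fderiv ℝ u x (EuclideanSpace.single i (1:ℝ)) * fderiv ℝ (fderiv ℝ (fderiv ℝ u)) x (EuclideanSpace.single j (1:ℝ)) (EuclideanSpace.single j (1:ℝ)) (EuclideanSpace.single i (1:ℝ))) := by
      rw [fderiv_fun_sum (fun i _ =>
        ((hgd x hx i).const_mul 2).fun_mul (aux_eval2_diff (hd2d x hx) (EuclideanSpace.single j (1:ℝ)) (EuclideanSpace.single i (1:ℝ))))]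
      rw [ContinuousLinearMap.sum_apply]
      refine Finset.sum_congr rfl fun i _ => ?_
      rw [fderiv_fun_mul ((hgd x hx i).const_mul 2) (aux_eval2_diff (hd2d x hx) (EuclideanSpace.single j (1:ℝ)) (EuclideanSpace.single i (1:ℝ)))]
      simp only [ContinuousLinearMap.add_apply, ContinuousLinearMap.smul_apply, smul_eq_mul]
      rw [fderiv_const_mul (hgd x hx i) 2]
      simp only [ContinuousLinearMap.smul_apply, smul_eq_mul]
      rw [hB x hx (EuclideanSpace.single j (1:ℝ)) (EuclideanSpace.single i (1:ℝ)), hT x hx (EuclideanSpace.single j (1:ℝ)) (EuclideanSpace.single i (1:ℝ)) (EuclideanSpace.single j (1:ℝ))]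
      ring
    rw [fderiv_fun_mul hgwd (hQd j)]
    simp only [ContinuousLinearMap.add_apply, ContinuousLinearMap.smul_apply, smul_eq_mul]
    rw [aux_gw_fderiv x (EuclideanSpace.single j (1:ℝ)), aux_inner_single, hQder]
    ring
  -- right-hand side rewrites
  have hRHS1 : (∑ i, ‖fderiv ℝ (gradient u) x (EuclideanSpace.single i (1:ℝ))‖^2)
      = ∑ i, ∑ j, (fderiv ℝ (fderiv ℝ u) x (EuclideanSpace.single i (1:ℝ)) (EuclideanSpace.single j (1:ℝ)))^2 := by
    refine Finset.sum_congr rfl fun i _ => ?_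
    rw [aux_norm_sq]
    exact Finset.sum_congr rfl fun j _ => by
      rw [aux_fderiv_grad_inner (hd1d x hx) (EuclideanSpace.single i (1:ℝ)) (EuclideanSpace.single j (1:ℝ))]
  have hRHS2 : ‖gradient u x‖^2 = ∑ i, (fderiv ℝ u x (EuclideanSpace.single i (1:ℝ)))^2 := by
    rw [aux_norm_sq]
    exact Finset.sum_congr rfl fun i _ => by rw [aux_grad_inner]
  rw [hdivX, hRHS1, hRHS2]
  rw [Finset.sum_congr rfl fun j _ => hterm j]
  have hAsymm : ∀ i j : Fin (n+1),
      (fun a b : Fin (n+1) => fderiv ℝ (fderiv ℝ u) x (EuclideanSpace.single a (1:ℝ)) (EuclideanSpace.single b (1:ℝ))) j i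
        = (fun a b : Fin (n+1) => fderiv ℝ (fderiv ℝ u) x (EuclideanSpace.single a (1:ℝ)) (EuclideanSpace.single b (1:ℝ))) i j :=
    fun i j => hBsymm x hx (EuclideanSpace.single j (1:ℝ)) (EuclideanSpace.single i (1:ℝ))
  have hT3sum : ∀ i : Fin (n+1),
      (∑ j, fderiv ℝ (fderiv ℝ (fderiv ℝ u)) x (EuclideanSpace.single j (1:ℝ)) (EuclideanSpace.single j (1:ℝ)) (EuclideanSpace.single i (1:ℝ)))
        = (1/2 : ℝ) * (fderiv ℝ u x (EuclideanSpace.single i (1:ℝ)) + fderiv ℝ (fderiv ℝ u) x (EuclideanSpace.single i (1:ℝ)) x) := by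
    intro i
    rw [Finset.sum_congr rfl fun j _ => (hT23 x hx (EuclideanSpace.single j (1:ℝ)) (EuclideanSpace.single j (1:ℝ)) (EuclideanSpace.single i (1:ℝ))).trans
      (hT12 x hx (EuclideanSpace.single j (1:ℝ)) (EuclideanSpace.single i (1:ℝ)) (EuclideanSpace.single j (1:ℝ)))]
    exact hdd i
  have hDexp : ∀ i : Fin (n+1),
      fderiv ℝ (fderiv ℝ u) x (EuclideanSpace.single i (1:ℝ)) x = ∑ j, x j * fderiv ℝ (fderiv ℝ u) x (EuclideanSpace.single i (1:ℝ)) (EuclideanSpace.single j (1:ℝ)) :=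
    fun i => hexp (fderiv ℝ (fderiv ℝ u) x (EuclideanSpace.single i (1:ℝ))) x
  rw [aux_algebra (gw x) (fun i => fderiv ℝ u x (EuclideanSpace.single i (1:ℝ)))
      (fun a b => fderiv ℝ (fderiv ℝ u) x (EuclideanSpace.single a (1:ℝ)) (EuclideanSpace.single b (1:ℝ)))
      (fun a b => fderiv ℝ (fderiv ℝ (fderiv ℝ u)) x (EuclideanSpace.single a (1:ℝ)) (EuclideanSpace.single a (1:ℝ)) (EuclideanSpace.single b (1:ℝ)))
      (fun j => x j) (fun i => fderiv ℝ (fderiv ℝ u) x (EuclideanSpace.single i (1:ℝ)) x)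
      hAsymm hT3sum hDexp]
  ring
end
end

section
/- Let $M$ be a smooth properly embedded hypersurface in $\mathbb{R}^{n+1}$ satisfying the shrinker equation $H = \tfrac{1}{2}\langle x,\nu\rangle$, let $\Omega$ be one of the two components of $\mathbb{R}^{n+1} \setminus M$ with outward unit normal $\nu$ and second fundamental form $h$ along $M$, and let $u$ be smooth up to the boundary of $\Omega$ with $\Delta u - \tfrac{1}{2}\langle x,\nabla u\rangle = 0$ in $\Omega$. Set $f = u|_M$. Then at each point of $M$: $\tfrac{1}{2}\,e^{-|x|^2/4}\,\langle\nabla(|\nabla u|^2),\nu\rangle = -2\,e^{-|x|^2/4}\big(\Delta_M f - \tfrac{1}{2}\langle x^{tan},\nabla^M f\rangle\big)\langle\nabla u,\nu\rangle + \mathrm{div}_M\big(e^{-|x|^2/4}\,\langle\nabla u,\nu\rangle\,\nabla^M f\big) - e^{-|x|^2/4}\,h(\nabla^M f,\nabla^M f)$. -/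
open MeasureTheory Metric Set
noncomputable section

variable {n : ℕ}

/-- `ν` is the outward unit normal to `Ω` along `M`. -/
def IsOutwardNormal {n : ℕ} (Ω : Set (E n)) (ν : E n → E n) (M : Set (E n)) : Prop :=
  ∀ x ∈ M, ∃ ε > (0 : ℝ), ∀ t ∈ Ioo (0 : ℝ) ε,
    x + t • ν x ∉ closure Ω ∧ x - t • ν x ∈ Ω

local notation "⟪" x ", " y "⟫" => (inner ℝ x y : ℝ)

lemma sum_clm_inner {n : ℕ} (α : E n →L[ℝ] ℝ) (b : E n) :
    ∑ i : Fin (n+1), α (EuclideanSpace.single i (1:ℝ)) * ⟪b, EuclideanSpace.single i (1:ℝ)⟫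
      = α b := by
  have hb : ∑ i : Fin (n+1), b i • EuclideanSpace.single i (1:ℝ) = b := by
    simpa [EuclideanSpace.basisFun_apply] using
      (EuclideanSpace.basisFun (Fin (n+1)) ℝ).sum_repr b
  calc ∑ i : Fin (n+1), α (EuclideanSpace.single i (1:ℝ)) * ⟪b, EuclideanSpace.single i (1:ℝ)⟫
      = ∑ i : Fin (n+1), α (b i • EuclideanSpace.single i (1:ℝ)) := by
        refine Finset.sum_congr rfl fun i _ => ?_
        rw [_root_.map_smul]
        simp [EuclideanSpace.inner_single_right]
        ring
    _ = α b := by rw [← map_sum, hb]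

set_option maxHeartbeats 1000000 in
/-- If `u` is drift-harmonic in `Ω` and smooth up to the boundary `M = ∂Ω` of a shrinker
domain, then along `M`, with `f = u|_M` and `h(X,Y) = ⟨D_X ν, Y⟩`:
`½ e^{-|x|²/4} ⟨∇(|∇u|²),ν⟩ = -2 e^{-|x|²/4}(Δ_M f - ½⟨x^tan,∇^M f⟩)⟨∇u,ν⟩
 + div_M(e^{-|x|²/4}⟨∇u,ν⟩∇^M f) - e^{-|x|²/4} h(∇^M f,∇^M f)`. -/
theorem stmt_15 {n : ℕ} (M : Set (E n)) (ν : E n → E n)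
    (hM : IsHypersurface M ν) (hshr : ShrinkerEqn M ν)
    (Ω : Set (E n)) (hΩ : IsOpen Ω) (hfr : frontier Ω = M) (hout : IsOutwardNormal Ω ν M)
    (u : E n → ℝ) (V : Set (E n)) (hV : IsOpen V) (hcl : closure Ω ⊆ V)
    (hu : ContDiffOn ℝ (⊤ : ℕ∞) u V)
    (hdrift : ∀ x ∈ Ω, divg (gradient u) x - (inner ℝ x (gradient u x) : ℝ) / 2 = 0) :
    ∀ x ∈ M,
      (1 / 2 : ℝ) * gw x * (inner ℝ (gradient (fun z => ‖gradient u z‖ ^ 2) x) (ν x) : ℝ)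
        = -2 * gw x * (lapM ν u x - (inner ℝ (xtan ν x) (tangGrad ν u x) : ℝ) / 2)
              * (inner ℝ (gradient u x) (ν x) : ℝ)
          + tangDiv ν (fun y => (gw y * (inner ℝ (gradient u y) (ν y) : ℝ)) • tangGrad ν u y) x
          - gw x * (inner ℝ (fderiv ℝ ν x (tangGrad ν u x)) (tangGrad ν u x) : ℝ) := by
  intro x hx
  classical
  -- basic memberships
  have hxcl : x ∈ closure Ω := by
    rw [← hfr] at hx
    exact frontier_subset_closure hx
  have hxV : x ∈ V := hcl hxcl
  have hVx : V ∈ nhds x := hV.mem_nhds hxV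
  have huAt : ContDiffAt ℝ (⊤ : ℕ∞) u x := hu.contDiffAt hVx
  -- unit normal facts
  have hν₀ : ⟪ν x, ν x⟫ = 1 := by
    rw [real_inner_self_eq_norm_sq, hM.nu_unit x hx]; norm_num
  -- the Hessian-type derivative of the gradient
  have hu2 : ContDiffOn ℝ 2 (fderiv ℝ u) V := hu.fderiv_of_isOpen hV (WithTop.coe_le_coe.2 le_top)
  have hDudiff : DifferentiableAt ℝ (fderiv ℝ u) x :=
    (hu2.contDiffAt hVx).differentiableAt (by norm_num)
  have hgradeq : gradient u = fun y => (InnerProductSpace.toDual ℝ (E n)).symm (fderiv ℝ u y) :=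
    rfl
  obtain ⟨A, hA, hAapp⟩ :
      ∃ A : E n →L[ℝ] E n, HasFDerivAt (gradient u) A x ∧
        ∀ v w : E n, ⟪A v, w⟫ = fderiv ℝ (fderiv ℝ u) x v w := by
    refine ⟨((InnerProductSpace.toDual ℝ (E n)).symm.toLinearIsometry.toContinuousLinearMap).comp
      (fderiv ℝ (fderiv ℝ u) x), ?_, ?_⟩
    · rw [hgradeq]
      exact ((InnerProductSpace.toDual ℝ
        (E n)).symm.toLinearIsometry.toContinuousLinearMap.hasFDerivAt).comp x
        hDudiff.hasFDerivAt
    · intro v w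
      exact InnerProductSpace.toDual_symm_apply
  have hsymm : ∀ v w : E n, ⟪A v, w⟫ = ⟪A w, v⟫ := by
    intro v w
    rw [hAapp, hAapp]
    exact (huAt.isSymmSndFDerivAt (by rw [minSmoothness_of_isRCLikeNormedField]; exact WithTop.coe_le_coe.2 le_top)).eq v w
  -- derivative of ν
  have hBdiff : DifferentiableAt ℝ ν x := ((hM.nu_smooth.differentiable (by simp)) x)
  set B : E n →L[ℝ] E n := fderiv ℝ ν x with hBdef
  have hB : HasFDerivAt ν B x := hBdiff.hasFDerivAt
  -- abbreviations
  set ν₀ : E n := ν x with hν₀def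
  set g0 : E n := gradient u x with hg0def
  -- F1 : the drift equation at the boundary point
  have hF1 : divg (gradient u) x = ⟪x, g0⟫ / 2 := by
    set Φ : E n → ℝ := fun y => (∑ i : Fin (n+1),
        fderiv ℝ (fderiv ℝ u) y (EuclideanSpace.single i (1:ℝ)) (EuclideanSpace.single i (1:ℝ)))
      - fderiv ℝ u y y / 2 with hΦdef
    have hΦeq : ∀ y ∈ V, Φ y = divg (gradient u) y - (inner ℝ y (gradient u y) : ℝ) / 2 := by
      intro y hy
      have hdiffy : DifferentiableAt ℝ (fderiv ℝ u) y :=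
        (hu2.contDiffAt (hV.mem_nhds hy)).differentiableAt (by norm_num)
      have hAy : HasFDerivAt (gradient u)
          (((InnerProductSpace.toDual ℝ (E n)).symm.toLinearIsometry.toContinuousLinearMap).comp
            (fderiv ℝ (fderiv ℝ u) y)) y := by
        rw [hgradeq]
        exact ((InnerProductSpace.toDual ℝ
          (E n)).symm.toLinearIsometry.toContinuousLinearMap.hasFDerivAt).comp y
          hdiffy.hasFDerivAt
      have h1 : divg (gradient u) y = ∑ i : Fin (n+1),
          fderiv ℝ (fderiv ℝ u) y (EuclideanSpace.single i (1:ℝ))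
            (EuclideanSpace.single i (1:ℝ)) := by
        simp only [divg]
        rw [hAy.fderiv]
        refine Finset.sum_congr rfl fun i _ => ?_
        exact InnerProductSpace.toDual_symm_apply
      have h2 : (inner ℝ y (gradient u y) : ℝ) = fderiv ℝ u y y := by
        rw [real_inner_comm]
        exact InnerProductSpace.toDual_symm_apply
      rw [hΦdef, h1, h2]
    have hΦcont : ContinuousOn Φ V := by
      have hcont2 : ContinuousOn (fderiv ℝ (fderiv ℝ u)) V :=
        hu2.continuousOn_fderiv_of_isOpen hV (by norm_num)
      have hcont1 : ContinuousOn (fderiv ℝ u) V :=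
        hu.continuousOn_fderiv_of_isOpen hV (by simp)
      apply ContinuousOn.sub
      · apply continuousOn_finset_sum
        intro i _
        exact (hcont2.clm_apply continuousOn_const).clm_apply continuousOn_const
      · exact (hcont1.clm_apply continuousOn_id).div_const 2
    have hΩV : Ω ⊆ V := fun y hy => hcl (subset_closure hy)
    have hΦ0 : ∀ y ∈ Ω, Φ y = 0 := fun y hy => by
      rw [hΦeq y (hΩV hy)]; exact hdrift y hy
    have hΦx : Φ x = 0 := by
      have hcw : ContinuousWithinAt Φ Ω x :=
        (hΦcont.continuousWithinAt hxV).mono hΩV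
      have hmem := hcw.mem_closure_image hxcl
      have himg : Φ '' Ω ⊆ {0} := by rintro - ⟨y, hy, rfl⟩; exact hΦ0 y hy
      exact (closure_minimal himg isClosed_singleton) hmem
    have hfin := hΦeq x hxV
    rw [hΦx, ← hg0def] at hfin
    linarith
  -- shrinker equation in explicit form
  have hshr' : divg ν x = ⟪x, ν₀⟫ / 2 + ⟪B ν₀, ν₀⟫ := by
    have h := hshr x hx
    simp only [meanCurv, tangDiv] at h
    rw [← hBdef, ← hν₀def] at h
    linarith [h]
  -- F2 : tangential derivative of the unit normal condition
  have hF2 : ⟪B g0, ν₀⟫ = ⟪g0, ν₀⟫ * ⟪B ν₀, ν₀⟫ := by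
    obtain ⟨r, hr, F, hF, hiff, hgradF⟩ := hM.localLevel x hx
    have hxball : x ∈ ball x r := mem_ball_self hr
    have hFx : F x = 0 := (hiff x hxball).1 hx
    obtain ⟨hFne, hFgrad⟩ := hgradF x ⟨hxball, hx⟩
    have hstrict : HasStrictFDerivAt F (fderiv ℝ F x) x :=
      (hF.contDiffAt).hasStrictFDerivAt (by simp)
    have hfapp : ∀ v : E n, fderiv ℝ F x v = ⟪gradient F x, v⟫ := fun v =>
      (InnerProductSpace.toDual_symm_apply).symm
    have hGG : ⟪gradient F x, gradient F x⟫ ≠ 0 := fun h => hFne (inner_self_eq_zero.1 h)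
    have hsurj : (fderiv ℝ F x).range = ⊤ := by
      rw [LinearMap.range_eq_top]
      intro c
      refine ⟨(c / ⟪gradient F x, gradient F x⟫) • gradient F x, ?_⟩
      rw [ContinuousLinearMap.coe_coe, ContinuousLinearMap.map_smul, hfapp, smul_eq_mul]
      exact div_mul_cancel₀ c hGG
    set K := (fderiv ℝ F x).ker with hK
    have h0 := hstrict.to_implicitFunction hsurj
    set φ : ℝ → K → E n := hstrict.implicitFunction F (fderiv ℝ F x) hsurj with hφ
    have hφ0 : φ (F x) 0 = x := hstrict.implicitFunction_apply_image hsurj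
    have hev1 : ∀ᶠ y : K in nhds 0, F (φ (F x) y) = F x := by
      have hmap := hstrict.map_implicitFunction_eq hsurj
      have ht : Filter.Tendsto (fun y : K => ((F x), y)) (nhds 0) (nhds (F x, 0)) :=
        Filter.Tendsto.prodMk_nhds tendsto_const_nhds Filter.tendsto_id
      exact ht.eventually hmap
    have hev2 : ∀ᶠ y : K in nhds 0, φ (F x) y ∈ ball x r := by
      have hb : ball x r ∈ nhds (φ (F x) 0) := by rw [hφ0]; exact ball_mem_nhds x hr
      exact h0.continuousAt.preimage_mem_nhds hb
    have hevG : (fun y : K => (⟪ν (φ (F x) y), ν (φ (F x) y)⟫ : ℝ) - 1) =ᶠ[nhds 0]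
        (fun _ => (0:ℝ)) := by
      filter_upwards [hev1, hev2] with y h1 h2
      have hyM : φ (F x) y ∈ M := (hiff _ h2).2 (by rw [h1, hFx])
      rw [real_inner_self_eq_norm_sq, hM.nu_unit _ hyM]
      norm_num
    have hGder : HasFDerivAt (fun z => (⟪ν z, ν z⟫ : ℝ) - 1)
        ((fderivInnerCLM ℝ (ν x, ν x)).comp (B.prod B)) (φ (F x) 0) := by
      rw [hφ0]
      exact (hB.inner ℝ hB).sub_const 1
    have hcomp : HasFDerivAt ((fun z => (⟪ν z, ν z⟫ : ℝ) - 1) ∘ (φ (F x)))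
        (((fderivInnerCLM ℝ (ν x, ν x)).comp (B.prod B)).comp (Submodule.subtypeL K)) 0 :=
      hGder.comp 0 h0.hasFDerivAt
    have hzero : (((fderivInnerCLM ℝ (ν x, ν x)).comp (B.prod B)).comp (Submodule.subtypeL K))
        = (0 : K →L[ℝ] ℝ) := by
      have h1 : HasFDerivAt (fun _ : K => (0:ℝ))
          ((((fderivInnerCLM ℝ (ν x, ν x)).comp (B.prod B)).comp (Submodule.subtypeL K))) 0 :=
        hcomp.congr_of_eventuallyEq hevG.symm
      exact h1.unique (hasFDerivAt_const 0 0)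
    have hνT : ⟪ν x, g0 - ⟪g0, ν₀⟫ • ν₀⟫ = 0 := by
      rw [← hν₀def]
      rw [inner_sub_right, real_inner_smul_right, hν₀, real_inner_comm ν₀ g0]
      ring
    have hTker : (g0 - ⟪g0, ν₀⟫ • ν₀) ∈ K := by
      rw [hK, LinearMap.mem_ker]
      rw [ContinuousLinearMap.coe_coe, hfapp, hFgrad, real_inner_smul_left, hνT, mul_zero]
    have happ := ContinuousLinearMap.ext_iff.1 hzero ⟨_, hTker⟩
    simp only [ContinuousLinearMap.comp_apply, Submodule.subtypeL_apply,
      ContinuousLinearMap.prod_apply, fderivInnerCLM_apply, ContinuousLinearMap.zero_apply]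
      at happ
    rw [← hν₀def] at happ
    have hBT : ⟪B (g0 - ⟪g0, ν₀⟫ • ν₀), ν₀⟫ = 0 := by
      have hcomm : ⟪ν₀, B (g0 - ⟪g0, ν₀⟫ • ν₀)⟫ = ⟪B (g0 - ⟪g0, ν₀⟫ • ν₀), ν₀⟫ :=
        real_inner_comm _ _
      rw [hcomm] at happ
      linarith
    rw [_root_.map_sub, _root_.map_smul, inner_sub_left, real_inner_smul_left] at hBT
    linarith
  -- derivative of the Gaussian weight
  obtain ⟨Dgw, hgw, hgwapp⟩ :
      ∃ D : E n →L[ℝ] ℝ, HasFDerivAt gw D x ∧ ∀ v : E n, D v = -(gw x / 2) * ⟪x, v⟫ := by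
    have hgweq : gw = fun y : E n => Real.exp ((-(1:ℝ)/4) * (⟪y, y⟫ : ℝ)) := by
      funext y
      rw [gw, real_inner_self_eq_norm_sq]
      congr 1
      ring
    rw [hgweq]
    refine ⟨_, (((hasFDerivAt_id (𝕜 := ℝ) x).inner ℝ (hasFDerivAt_id x)).const_mul
      ((-(1:ℝ)/4))).exp, ?_⟩
    intro v
    simp only [ContinuousLinearMap.comp_apply, ContinuousLinearMap.prod_apply,
      ContinuousLinearMap.smul_apply, fderivInnerCLM_apply, ContinuousLinearMap.id_apply,
      id_eq, smul_eq_mul, ContinuousLinearMap.coe_smul', Pi.smul_apply]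
    rw [real_inner_comm v x]
    ring
  -- derivative of ⟨∇u, ν⟩
  obtain ⟨Dp, hp, hpapp⟩ :
      ∃ D : E n →L[ℝ] ℝ,
        HasFDerivAt (fun y => (inner ℝ (gradient u y) (ν y) : ℝ)) D x ∧
        ∀ v : E n, D v = ⟪g0, B v⟫ + ⟪A v, ν₀⟫ := by
    refine ⟨_, hA.inner ℝ hB, ?_⟩
    intro v
    simp [fderivInnerCLM_apply, -inner_gradient_left, -inner_gradient_right]
    rfl
  -- derivative of the tangential gradient
  obtain ⟨DT, hT, hTapp⟩ :
      ∃ D : E n →L[ℝ] E n, HasFDerivAt (tangGrad ν u) D x ∧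
        ∀ v : E n, D v = A v - ⟪g0, ν₀⟫ • B v - Dp v • ν₀ := by
    have h := hA.sub (hp.smul hB)
    refine ⟨_, h, ?_⟩
    intro v
    simp [ContinuousLinearMap.smulRight_apply, -inner_gradient_left, -inner_gradient_right]
    module
  -- basic facts about the tangential gradient at x
  have hTx : tangGrad ν u x = g0 - ⟪g0, ν₀⟫ • ν₀ := by
    rw [hg0def, hν₀def]; rfl
  have hTν : ⟪tangGrad ν u x, ν₀⟫ = 0 := by
    rw [hTx]
    simp only [inner_sub_left, real_inner_smul_left, hν₀, mul_one, sub_self]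
  -- derivative of the scalar factor gw * ⟨∇u, ν⟩
  obtain ⟨Dc, hc, hcapp⟩ :
      ∃ D : E n →L[ℝ] ℝ,
        HasFDerivAt (fun y => gw y * (inner ℝ (gradient u y) (ν y) : ℝ)) D x ∧
        ∀ v : E n, D v = gw x * Dp v + ⟪g0, ν₀⟫ * Dgw v := by
    refine ⟨_, hgw.mul hp, ?_⟩
    intro v
    rw [← hg0def, ← hν₀def]
    simp only [ContinuousLinearMap.add_apply, ContinuousLinearMap.coe_smul', Pi.smul_apply,
      smul_eq_mul]
  -- derivative of the vector field in the statement
  obtain ⟨DY, hY, hYapp⟩ :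
      ∃ D : E n →L[ℝ] E n,
        HasFDerivAt (fun y => (gw y * (inner ℝ (gradient u y) (ν y) : ℝ)) • tangGrad ν u y) D x ∧
        ∀ v : E n, D v = (gw x * ⟪g0, ν₀⟫) • DT v + Dc v • tangGrad ν u x := by
    refine ⟨_, hc.smul hT, ?_⟩
    intro v
    rw [← hg0def, ← hν₀def]
    simp only [ContinuousLinearMap.add_apply, ContinuousLinearMap.coe_smul', Pi.smul_apply,
      ContinuousLinearMap.smulRight_apply]
  -- divergence of the tangential gradient
  have hdivgT : ∑ i : Fin (n+1), ⟪DT (EuclideanSpace.single i (1:ℝ)), EuclideanSpace.single i (1:ℝ)⟫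
      = divg (gradient u) x - ⟪g0, ν₀⟫ * divg ν x - Dp ν₀ := by
    have hco : ∀ i : Fin (n+1),
        ⟪DT (EuclideanSpace.single i (1:ℝ)), EuclideanSpace.single i (1:ℝ)⟫
        = ⟪A (EuclideanSpace.single i (1:ℝ)), EuclideanSpace.single i (1:ℝ)⟫
          - ⟪g0, ν₀⟫ * ⟪B (EuclideanSpace.single i (1:ℝ)), EuclideanSpace.single i (1:ℝ)⟫
          - Dp (EuclideanSpace.single i (1:ℝ)) * ⟪ν₀, EuclideanSpace.single i (1:ℝ)⟫ := by
      intro i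
      rw [hTapp]
      simp only [inner_sub_left, real_inner_smul_left]
    rw [Finset.sum_congr rfl (fun i _ => hco i), Finset.sum_sub_distrib, Finset.sum_sub_distrib,
      ← Finset.mul_sum, sum_clm_inner]
    simp only [divg]
    rw [hA.fderiv, hB.fderiv]
  -- the Laplace–Beltrami term
  have hlap0 : lapM ν u x
      = (∑ i : Fin (n+1), ⟪DT (EuclideanSpace.single i (1:ℝ)), EuclideanSpace.single i (1:ℝ)⟫)
        - ⟪DT ν₀, ν₀⟫ := by
    simp only [lapM, tangDiv, divg]
    rw [hT.fderiv, ← hν₀def]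
  have hlap : lapM ν u x = ⟪x, g0⟫ / 2 - ⟪g0, ν₀⟫ * ⟪x, ν₀⟫ / 2 - ⟪A ν₀, ν₀⟫ := by
    rw [hlap0, hdivgT, hF1, hshr', hTapp, hpapp]
    simp only [inner_sub_left, real_inner_smul_left, hν₀, mul_one]
    ring
  -- the x^tan term
  have hxtan : ⟪xtan ν x, tangGrad ν u x⟫ = ⟪x, g0⟫ - ⟪g0, ν₀⟫ * ⟪x, ν₀⟫ := by
    have hxt : xtan ν x = x - ⟪x, ν₀⟫ • ν₀ := by rw [hν₀def]; rfl
    rw [hxt, hTx]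
    have hc1 : ⟪ν₀, g0⟫ = ⟪g0, ν₀⟫ := real_inner_comm _ _
    simp only [inner_sub_left, inner_sub_right, real_inner_smul_left, real_inner_smul_right,
      hν₀, mul_one, hc1]
    ring
  -- the tangential divergence of the statement's vector field
  have htangY : tangDiv ν (fun y => (gw y * (inner ℝ (gradient u y) (ν y) : ℝ)) • tangGrad ν u y) x
      = (gw x * ⟪g0, ν₀⟫) * lapM ν u x + Dc (tangGrad ν u x) := by
    have hco : ∀ i : Fin (n+1),
        ⟪DY (EuclideanSpace.single i (1:ℝ)), EuclideanSpace.single i (1:ℝ)⟫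
        = (gw x * ⟪g0, ν₀⟫) * ⟪DT (EuclideanSpace.single i (1:ℝ)), EuclideanSpace.single i (1:ℝ)⟫
          + Dc (EuclideanSpace.single i (1:ℝ)) * ⟪tangGrad ν u x, EuclideanSpace.single i (1:ℝ)⟫ := by
      intro i
      rw [hYapp]
      simp only [inner_add_left, real_inner_smul_left]
    simp only [tangDiv, divg]
    rw [hY.fderiv, ← hν₀def]
    rw [Finset.sum_congr rfl (fun i _ => hco i), Finset.sum_add_distrib, ← Finset.mul_sum,
      sum_clm_inner, hlap0, hYapp]
    simp only [inner_add_left, real_inner_smul_left, hTν, mul_zero, add_zero]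
    ring
  -- the value Dc (tangGrad ν u x)
  have hDcT : Dc (tangGrad ν u x)
      = gw x * (⟪B g0, g0⟫ - ⟪g0, ν₀⟫ * ⟪B ν₀, g0⟫ + ⟪A ν₀, g0⟫ - ⟪g0, ν₀⟫ * ⟪A ν₀, ν₀⟫)
        + ⟪g0, ν₀⟫ * (-(gw x / 2) * (⟪x, g0⟫ - ⟪g0, ν₀⟫ * ⟪x, ν₀⟫)) := by
    rw [hcapp, hpapp, hgwapp, hTx]
    simp only [_root_.map_sub, _root_.map_smul, inner_sub_left, inner_sub_right, real_inner_smul_left,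
      real_inner_smul_right, smul_eq_mul]
    rw [real_inner_comm g0 (B g0), real_inner_comm g0 (B ν₀), hsymm g0 ν₀]
    ring
  -- the second fundamental form term
  have hBTT : ⟪fderiv ℝ ν x (tangGrad ν u x), tangGrad ν u x⟫
      = ⟪B g0, g0⟫ - ⟪g0, ν₀⟫ * ⟪B ν₀, g0⟫ := by
    rw [← hBdef, hTx]
    simp only [_root_.map_sub, _root_.map_smul, inner_sub_left, inner_sub_right, real_inner_smul_left,
      real_inner_smul_right, smul_eq_mul]
    rw [hF2]
    ring
  -- the left-hand side
  have hlhs : (inner ℝ (gradient (fun z => ‖gradient u z‖ ^ 2) x) ν₀ : ℝ) = 2 * ⟪A ν₀, g0⟫ := by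
    have heq : (fun z => ‖gradient u z‖ ^ 2)
        = fun y => (inner ℝ (gradient u y) (gradient u y) : ℝ) :=
      funext fun y => (real_inner_self_eq_norm_sq _).symm
    obtain ⟨Dq, hq, hqapp⟩ :
        ∃ D : E n →L[ℝ] ℝ,
          HasFDerivAt (fun y => (inner ℝ (gradient u y) (gradient u y) : ℝ)) D x ∧
          ∀ v : E n, D v = ⟪g0, A v⟫ + ⟪A v, g0⟫ := by
      refine ⟨_, hA.inner ℝ hA, ?_⟩
      intro v
      rw [← hg0def]
      simp only [ContinuousLinearMap.comp_apply, ContinuousLinearMap.prod_apply,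
        fderivInnerCLM_apply]
    rw [heq]
    rw [show gradient (fun y => (inner ℝ (gradient u y) (gradient u y) : ℝ)) x
        = (InnerProductSpace.toDual ℝ (E n)).symm
            (fderiv ℝ (fun y => (inner ℝ (gradient u y) (gradient u y) : ℝ)) x) from rfl]
    rw [hq.fderiv, InnerProductSpace.toDual_symm_apply, hqapp,
      real_inner_comm g0 (A ν₀)]
    ring
  -- final assembly
  rw [hlhs, htangY, hDcT, hBTT, hlap, hxtan]
  ring
end
end
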